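/- The logistic put value function p(x,τ) = √τ · ln(1 + exp(x/√τ)) satisfies the dual Dupire partial differential equation ∂p/∂τ = (1/2)·η²(x/√τ)·∂²p/∂x² for all x ∈ ℝ and τ > 0, where η²(z) = (1+e^z)·ln(1+e^{−z}) + (1+e^{−z})·ln(1+e^z). -/

import Mathlib

/-!
`p(x, τ) = s f(x / s)` is the perspective of `f = softplus` evaluated at `s = √τ`. For a
perspective `∂ₛ = f(z) - z f'(z)` and `∂ₓₓ = f''(z) / s` with `z = x / s`, and `ds/dτ = 1 / (2s)`.
The PDE therefore reduces to the one-variable identity `η²(z) f''(z) = f(z) - z f'(z)`, which for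
`f' = σ` (the sigmoid) and `f'' = σ (1 - σ)` follows from `σ(z) (1 + e^{-z}) = 1`,
`σ(-z) (1 + e^z) = 1` and `softplus(-z) = softplus(z) - z`.
-/

/-- The squared variance function of the logistic model. -/
noncomputable def eta2 (z : ℝ) : ℝ :=
  (1 + Real.exp z) * Real.log (1 + Real.exp (-z)) +
    (1 + Real.exp (-z)) * Real.log (1 + Real.exp z)

/-- The logistic put value p(x,τ) = √τ · ln(1 + exp(x/√τ)). -/
noncomputable def logisticPut (x τ : ℝ) : ℝ :=
  Real.sqrt τ * Real.log (1 + Real.exp (x / Real.sqrt τ))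

open Real

noncomputable def softplus (u : ℝ) : ℝ := log (1 + exp u)

lemma hasDerivAt_softplus (u : ℝ) : HasDerivAt softplus (sigmoid u) u := by
  have h : HasDerivAt softplus (exp u / (1 + exp u)) u :=
    ((hasDerivAt_exp u).const_add 1).log (by positivity)
  refine h.congr_deriv ?_
  rw [sigmoid_def, exp_neg]
  field_simp
  ring

lemma softplus_neg (u : ℝ) : softplus (-u) = softplus u - u := by
  have h : 1 + exp (-u) = exp (-u) * (1 + exp u) := by
    rw [mul_add, mul_one, ← exp_add, neg_add_cancel, exp_zero, add_comm]
  rw [softplus, h, log_mul (exp_ne_zero _) (by positivity), log_exp, softplus]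
  ring

lemma eta2_eq_softplus (z : ℝ) :
    eta2 z = (1 + exp z) * softplus (-z) + (1 + exp (-z)) * softplus z := rfl

lemma eta2_mul_sigmoid_mul_one_sub_sigmoid (z : ℝ) :
    eta2 z * (sigmoid z * (1 - sigmoid z)) = softplus z - z * sigmoid z := by
  rw [eta2_eq_softplus, softplus_neg, ← sigmoid_neg, sigmoid_def, sigmoid_def, neg_neg]
  have h : exp z * exp (-z) = 1 := by rw [← exp_add, add_neg_cancel, exp_zero]
  field_simp
  linear_combination -softplus z * h

noncomputable def perspective (f : ℝ → ℝ) (x s : ℝ) : ℝ := s * f (x / s)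

section Perspective

variable {f : ℝ → ℝ} {d x s : ℝ}

lemma HasDerivAt.perspective_fst (hf : HasDerivAt f d (x / s)) (hs : s ≠ 0) :
    HasDerivAt (fun y => perspective f y s) d x := by
  refine ((hf.comp x ((hasDerivAt_id x).div_const s)).const_mul s).congr_deriv ?_
  field_simp

lemma HasDerivAt.perspective_snd (hf : HasDerivAt f d (x / s)) (hs : s ≠ 0) :
    HasDerivAt (perspective f x) (f (x / s) - x / s * d) s := by
  refine ((hasDerivAt_id s).mul
    (hf.comp s ((hasDerivAt_const s x).div (hasDerivAt_id s) hs))).congr_deriv ?_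
  simp only [id, Function.comp_apply]
  field_simp
  ring

lemma deriv_deriv_perspective_fst {f' : ℝ → ℝ} (hf : ∀ u, HasDerivAt f (f' u) u)
    (hf' : HasDerivAt f' d (x / s)) (hs : s ≠ 0) :
    deriv (deriv fun y => perspective f y s) x = d / s := by
  have h : deriv (fun y => perspective f y s) = fun y => f' (y / s) :=
    funext fun y => ((hf (y / s)).perspective_fst hs).deriv
  rw [h]
  exact (hf'.comp x ((hasDerivAt_id x).div_const s)).deriv.trans (by simp [div_eq_mul_inv])

end Perspective

theorem logisticPut_dualDupire (x τ : ℝ) (hτ : 0 < τ) :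
    deriv (fun t => logisticPut x t) τ =
      (1 / 2) * eta2 (x / Real.sqrt τ) * deriv (deriv (fun y => logisticPut y τ)) x := by
  have hs : √τ ≠ 0 := (sqrt_pos.2 hτ).ne'
  have hτ_deriv : HasDerivAt (fun t => logisticPut x t)
      ((softplus (x / √τ) - x / √τ * sigmoid (x / √τ)) * (1 / (2 * √τ))) τ :=
    ((hasDerivAt_softplus _).perspective_snd hs).comp τ (hasDerivAt_sqrt hτ.ne')
  have hxx : deriv (deriv fun y => logisticPut y τ) x
      = sigmoid (x / √τ) * (1 - sigmoid (x / √τ)) / √τ :=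
    deriv_deriv_perspective_fst hasDerivAt_softplus (hasDerivAt_sigmoid _) hs
  rw [hτ_deriv.deriv, hxx]
  linear_combination (-1 / (2 * √τ)) * eta2_mul_sigmoid_mul_one_sub_sigmoid (x / √τ)
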